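/- arXiv:2410.07690 — 3 statements merged into one kernel-verified Lean document; each statement's English description precedes it below -/
import Mathlib

section
/- Let x_{aj} > x_{aj'} > 0, v_{aj'} > v_{aj} > 0, and suppose the follower's best-response allocations satisfy x_{bj} = c·√x_{aj} − x_{aj} and x_{bj'} = c·√x_{aj'} − x_{aj'} for the same constant c > 0 with both positive. Then swapping the leader's allocations strictly increases the leader's utility over these two battlefields: (x_{aj'}·v_{aj})/(x_{aj'}+x_{bj'}) + (x_{aj}·v_{aj'})/(x_{aj}+x_{bj}) > (x_{aj}·v_{aj})/(x_{aj}+x_{bj}) + (x_{aj'}·v_{aj'})/(x_{aj'}+x_{bj'}). -/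
/-- If `x_{aj} > x_{aj'} > 0`, `v_{aj'} > v_{aj} > 0`, and the follower's best-response
allocations satisfy `x_{bj} = c√x_{aj} − x_{aj}`, `x_{bj'} = c√x_{aj'} − x_{aj'}` for the same
`c > 0` with both positive, then swapping the leader's allocations strictly increases the
leader's utility over these two battlefields. -/
theorem stmt8 (xaj xaj' vaj vaj' c xbj xbj' : ℝ)
    (h1 : xaj' < xaj) (h2 : 0 < xaj') (h3 : vaj < vaj') (h4 : 0 < vaj) (hc : 0 < c)
    (hbj : xbj = c * Real.sqrt xaj - xaj) (hbj' : xbj' = c * Real.sqrt xaj' - xaj')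
    (hpj : 0 < xbj) (hpj' : 0 < xbj') :
    xaj' * vaj / (xaj' + xbj') + xaj * vaj' / (xaj + xbj) >
      xaj * vaj / (xaj + xbj) + xaj' * vaj' / (xaj' + xbj') := by
  have h2' : (0:ℝ) < xaj := h2.trans h1
  set s := Real.sqrt xaj with hs
  set s' := Real.sqrt xaj' with hs'
  have hsp : 0 < s := Real.sqrt_pos.2 h2'
  have hsp' : 0 < s' := Real.sqrt_pos.2 h2
  have hss : s' < s := Real.sqrt_lt_sqrt h2.le h1
  have hsq : s * s = xaj := Real.mul_self_sqrt h2'.le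
  have hsq' : s' * s' = xaj' := Real.mul_self_sqrt h2.le
  have hd : xaj + xbj = c * s := by rw [hbj]; ring
  have hd' : xaj' + xbj' = c * s' := by rw [hbj']; ring
  rw [hd, hd', ← hsq, ← hsq']
  have hcs : (0:ℝ) < c * s := by positivity
  have hcs' : (0:ℝ) < c * s' := by positivity
  rw [gt_iff_lt, div_add_div _ _ hcs'.ne' hcs.ne', div_add_div _ _ hcs.ne' hcs'.ne',
    div_lt_div_iff₀ (by positivity) (by positivity)]
  nlinarith [mul_pos (mul_pos (sub_pos.2 h3) (sub_pos.2 hss)) (show (0:ℝ) < c^3*s^2*s'^2 by positivity)]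
end

section
/- Let K be a nonempty finite set of battlefields, and for each j ∈ K let x_{aj} > 0, v_{aj} > 0, v_{bj} > 0, x_b > 0. Define u_{aK}(x_a) = (Σ_{h∈K}√(x_{ah}v_{bh}) / (x_b + Σ_{h∈K}x_{ah})) · Σ_{j∈K}√(x_{aj}/v_{bj})·v_{aj}. Then Σ_{j∈K} x_{aj} · (∂u_{aK}/∂x_{aj}) = u_{aK}(x_a) · (1 − (Σ_{h∈K}x_{ah})/(x_b + Σ_{h∈K}x_{ah})) > 0; in particular, there exists r ∈ K with ∂u_{aK}/∂x_{ar} > 0. -/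
/-- Euler-type identity for the leader's aggregate utility
`u_{aK}(x) = (Σ_{h∈K}√(x_h v_{bh})/(x_b+Σ_{h∈K}x_h))·Σ_{j∈K}√(x_j/v_{bj})·v_{aj}`:
`Σ_{j∈K} x_j · ∂u_{aK}/∂x_j = u_{aK}(x)·(1 − Σx/(x_b+Σx)) > 0`; in particular some
partial derivative is strictly positive. -/
theorem stmt9 {ι : Type*} [Fintype ι] [DecidableEq ι] (K : Finset ι) (hK : K.Nonempty)
    (va vb : ι → ℝ) (xb : ℝ) (hxb : 0 < xb)
    (hva : ∀ j ∈ K, 0 < va j) (hvb : ∀ j ∈ K, 0 < vb j)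
    (x : ι → ℝ) (hx : ∀ j ∈ K, 0 < x j) :
    let uaK : (ι → ℝ) → ℝ := fun y =>
      (∑ h ∈ K, Real.sqrt (y h * vb h)) / (xb + ∑ h ∈ K, y h) *
        ∑ j ∈ K, Real.sqrt (y j / vb j) * va j
    (∑ j ∈ K, x j * deriv (fun s => uaK (Function.update x j s)) (x j) =
        uaK x * (1 - (∑ h ∈ K, x h) / (xb + ∑ h ∈ K, x h))) ∧
    0 < uaK x * (1 - (∑ h ∈ K, x h) / (xb + ∑ h ∈ K, x h)) ∧
    ∃ r ∈ K, 0 < deriv (fun s => uaK (Function.update x r s)) (x r) := by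
  intro uaK
  have huaK : uaK x = (∑ h ∈ K, Real.sqrt (x h * vb h)) / (xb + ∑ h ∈ K, x h) *
      ∑ j ∈ K, Real.sqrt (x j / vb j) * va j := rfl
  set X := ∑ h ∈ K, x h with hXdef
  set S := ∑ h ∈ K, Real.sqrt (x h * vb h) with hSdef
  set T := ∑ j ∈ K, Real.sqrt (x j / vb j) * va j with hTdef
  set D := xb + X with hDdef
  have hX0 : 0 < X := Finset.sum_pos (fun j hj => hx j hj) hK
  have hD0 : 0 < D := by rw [hDdef]; positivity
  have hS0 : 0 < S := Finset.sum_pos (fun j hj => Real.sqrt_pos.mpr (by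
    have := hx j hj; have := hvb j hj; positivity)) hK
  have hT0 : 0 < T := Finset.sum_pos (fun j hj => by
    have h1 := hx j hj; have h2 := hvb j hj; have h3 := hva j hj; positivity) hK
  clear_value X S T D
  have hder : ∀ j ∈ K, HasDerivAt (fun s => uaK (Function.update x j s))
      ((vb j / (2 * Real.sqrt (x j * vb j)) * D - S * 1) / D ^ 2 * T +
        S / D * (1 / (2 * Real.sqrt (x j / vb j)) * (1 / vb j) * va j)) (x j) := by
    intro j hj
    have hxj := hx j hj
    have hvbj := hvb j hj
    have hvaj := hva j hj
    have key : ∀ (s : ℝ) (F : ι → ℝ → ℝ),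
        ∑ h ∈ K, F h (Function.update x j s h) = F j s + ∑ h ∈ K.erase j, F h (x h) := by
      intro s F
      rw [← Finset.add_sum_erase K _ hj, Function.update_self]
      congr 1
      exact Finset.sum_congr rfl fun h hh =>
        by rw [Function.update_of_ne (Finset.ne_of_mem_erase hh)]
    have hfun : (fun s => uaK (Function.update x j s)) = fun s =>
        (Real.sqrt (s * vb j) + ∑ h ∈ K.erase j, Real.sqrt (x h * vb h)) /
          (xb + (s + ∑ h ∈ K.erase j, x h)) *
        (Real.sqrt (s / vb j) * va j + ∑ h ∈ K.erase j, Real.sqrt (x h / vb h) * va h) := by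
      funext s
      show (∑ h ∈ K, Real.sqrt (Function.update x j s h * vb h)) /
          (xb + ∑ h ∈ K, Function.update x j s h) *
          (∑ l ∈ K, Real.sqrt (Function.update x j s l / vb l) * va l) = _
      rw [key s (fun h t => Real.sqrt (t * vb h)),
        key s (fun h t => t),
        key s (fun h t => Real.sqrt (t / vb h) * va h)]
    rw [hfun]
    have hSsplit : S = Real.sqrt (x j * vb j) + ∑ h ∈ K.erase j, Real.sqrt (x h * vb h) := by
      rw [hSdef]; exact (Finset.add_sum_erase K _ hj).symm
    have hXsplit : X = x j + ∑ h ∈ K.erase j, x h := by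
      rw [hXdef]; exact (Finset.add_sum_erase K _ hj).symm
    have hTsplit : T = Real.sqrt (x j / vb j) * va j +
        ∑ h ∈ K.erase j, Real.sqrt (x h / vb h) * va h := by
      rw [hTdef]; exact (Finset.add_sum_erase K _ hj).symm
    have hA : HasDerivAt (fun s => Real.sqrt (s * vb j) + ∑ h ∈ K.erase j, Real.sqrt (x h * vb h))
        (vb j / (2 * Real.sqrt (x j * vb j))) (x j) := by
      have h1 : HasDerivAt (fun s : ℝ => s * vb j) (vb j) (x j) := hasDerivAt_mul_const (vb j)
      have h2 := (Real.hasDerivAt_sqrt (show x j * vb j ≠ 0 by positivity)).comp (x j) h1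
      have h3 : 1 / (2 * Real.sqrt (x j * vb j)) * vb j = vb j / (2 * Real.sqrt (x j * vb j)) := by
        ring
      exact (h3 ▸ h2).add_const _
    have hDd : HasDerivAt (fun s => xb + (s + ∑ h ∈ K.erase j, x h)) 1 (x j) := by
      simpa using ((hasDerivAt_id (x j)).add_const (∑ h ∈ K.erase j, x h)).const_add xb
    have hB : HasDerivAt (fun s => Real.sqrt (s / vb j) * va j +
        ∑ h ∈ K.erase j, Real.sqrt (x h / vb h) * va h)
        (1 / (2 * Real.sqrt (x j / vb j)) * (1 / vb j) * va j) (x j) := by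
      have h1 : HasDerivAt (fun s : ℝ => s / vb j) (1 / vb j) (x j) := by
        simpa using (hasDerivAt_id (x j)).div_const (vb j)
      have h2 := (Real.hasDerivAt_sqrt (show x j / vb j ≠ 0 by positivity)).comp (x j) h1
      exact (h2.mul_const (va j)).add_const _
    have hne : xb + (x j + ∑ h ∈ K.erase j, x h) ≠ 0 := by
      rw [← hXsplit, ← hDdef]; exact ne_of_gt hD0
    have := (hA.div hDd hne).mul hB
    exact this.congr_deriv (by simp only [Pi.div_apply]; rw [← hXsplit, ← hSsplit, ← hTsplit, ← hDdef])
  have hmain : ∑ j ∈ K, x j * deriv (fun s => uaK (Function.update x j s)) (x j) =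
      uaK x * (1 - X / D) := by
    have hsum1 : ∀ j ∈ K, x j * deriv (fun s => uaK (Function.update x j s)) (x j) =
        D * T / (2 * D ^ 2) * Real.sqrt (x j * vb j) - S * T / D ^ 2 * x j +
          S / (2 * D) * (Real.sqrt (x j / vb j) * va j) := by
      intro j hj
      have hxj := hx j hj
      have hvbj := hvb j hj
      have hvaj := hva j hj
      rw [(hder j hj).deriv]
      have ha0 : (0:ℝ) < Real.sqrt (x j * vb j) := Real.sqrt_pos.mpr (by positivity)
      have hb0 : (0:ℝ) < Real.sqrt (x j / vb j) := Real.sqrt_pos.mpr (by positivity)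
      have ha : Real.sqrt (x j * vb j) * Real.sqrt (x j * vb j) = x j * vb j :=
        Real.mul_self_sqrt (by positivity)
      have hb' : Real.sqrt (x j / vb j) * Real.sqrt (x j / vb j) * vb j = x j := by
        rw [Real.mul_self_sqrt (by positivity)]
        field_simp
      set a := Real.sqrt (x j * vb j) with hadef
      set b := Real.sqrt (x j / vb j) with hbdef
      clear_value a b
      have hma : x j * (vb j / (2 * a)) = a / 2 := by
        field_simp
        linear_combination -ha
      have hmb : x j * (1 / (2 * b) * (1 / vb j)) = b / 2 := by
        field_simp
        linear_combination -hb'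
      calc x j * ((vb j / (2 * a) * D - S * 1) / D ^ 2 * T +
            S / D * (1 / (2 * b) * (1 / vb j) * va j))
          = (x j * (vb j / (2 * a))) * (D * T / D ^ 2) -
              S * T / D ^ 2 * x j +
            S / D * ((x j * (1 / (2 * b) * (1 / vb j))) * va j) := by
            ring
        _ = _ := by rw [hma, hmb]; ring
    rw [Finset.sum_congr rfl hsum1, Finset.sum_add_distrib, Finset.sum_sub_distrib,
      ← Finset.mul_sum, ← Finset.mul_sum, ← Finset.mul_sum, ← hSdef, ← hXdef, ← hTdef, huaK]
    field_simp
    ring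
  have hpos : 0 < uaK x * (1 - X / D) := by
    rw [huaK]
    have h1 : 1 - X / D = xb / D := by
      rw [hDdef]; field_simp; ring
    rw [h1]
    positivity
  refine ⟨hmain, hpos, ?_⟩
  by_contra hcon
  push_neg at hcon
  have hle : ∑ j ∈ K, x j * deriv (fun s => uaK (Function.update x j s)) (x j) ≤ 0 :=
    Finset.sum_nonpos fun j hj =>
      mul_nonpos_of_nonneg_of_nonpos (le_of_lt (hx j hj)) (hcon j hj)
  rw [hmain] at hle
  exact absurd hle (not_le.mpr hpos)
end

section
/- Fix n ≥ 1 and positive reals v_{aj}, v_{bj} (j = 1..n) not all proportional, and set α = −sqrt((Σ_j v_{aj}²/v_{bj}) / (Σ_j v_{bj})). Then α maximizes over α < 0 the function g(α) = ((Σ_j v_{aj})² − (Σ_j v_{bj})(Σ_j v_{aj}²/v_{bj}))·α / (α²·Σ_j v_{bj} − 2α·Σ_j v_{aj} + Σ_j v_{aj}²/v_{bj}). -/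
/-- When the ratios `v_{aj}/v_{bj}` are not all equal, the parameter
`α₀ = −√((Σ_j v_{aj}²/v_{bj})/(Σ_j v_{bj}))` maximizes, over `α < 0`, the leader's utility
`g(α) = ((Σv_a)² − (Σv_b)(Σv_a²/v_b))·α / (α²Σv_b − 2αΣv_a + Σv_a²/v_b)`. -/
theorem stmt10 (n : ℕ) (va vb : Fin n → ℝ) (hva : ∀ j, 0 < va j) (hvb : ∀ j, 0 < vb j)
    (hnp : ∃ j k, va j / vb j ≠ va k / vb k) :
    let α₀ : ℝ := -Real.sqrt ((∑ j, (va j) ^ 2 / vb j) / (∑ j, vb j))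
    let g : ℝ → ℝ := fun α =>
      ((∑ j, va j) ^ 2 - (∑ j, vb j) * (∑ j, (va j) ^ 2 / vb j)) * α /
        (α ^ 2 * (∑ j, vb j) - 2 * α * (∑ j, va j) + ∑ j, (va j) ^ 2 / vb j)
    ∀ α < 0, g α ≤ g α₀ := by
  intro α₀ g α hα
  obtain ⟨j₀, -, -⟩ := hnp
  have hne : (Finset.univ : Finset (Fin n)).Nonempty := ⟨j₀, Finset.mem_univ j₀⟩
  set A := ∑ j, va j with hA
  set B := ∑ j, vb j with hB
  set C := ∑ j, (va j) ^ 2 / vb j with hC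
  have hApos : 0 < A := Finset.sum_pos (fun j _ => hva j) hne
  have hBpos : 0 < B := Finset.sum_pos (fun j _ => hvb j) hne
  have hCpos : 0 < C :=
    Finset.sum_pos (fun j _ => div_pos (pow_pos (hva j) 2) (hvb j)) hne
  -- Cauchy–Schwarz: A² ≤ B * C
  have hCS : A ^ 2 ≤ B * C := by
    have key := Finset.sum_mul_sq_le_sq_mul_sq Finset.univ
      (fun j => Real.sqrt (vb j)) (fun j => va j / Real.sqrt (vb j))
    have h1 : ∀ j : Fin n, Real.sqrt (vb j) * (va j / Real.sqrt (vb j)) = va j := by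
      intro j
      field_simp [Real.sqrt_ne_zero'.mpr (hvb j)]
    have h2 : ∀ j : Fin n, Real.sqrt (vb j) ^ 2 = vb j := fun j =>
      Real.sq_sqrt (hvb j).le
    have h3 : ∀ j : Fin n, (va j / Real.sqrt (vb j)) ^ 2 = (va j) ^ 2 / vb j := by
      intro j
      rw [div_pow, h2]
    simpa [h1, h2, h3, hA, hB, hC] using key
  have hα₀ : α₀ = -Real.sqrt (C / B) := rfl
  clear_value α₀
  have hsq : 0 < Real.sqrt (C / B) := Real.sqrt_pos.mpr (div_pos hCpos hBpos)
  have hα₀neg : α₀ < 0 := by rw [hα₀]; linarith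
  have hα₀sq : α₀ ^ 2 * B = C := by
    rw [hα₀, neg_pow, Real.sq_sqrt (div_pos hCpos hBpos).le]
    field_simp
  have hD : 0 < α ^ 2 * B - 2 * α * A + C := by
    nlinarith [mul_nonneg (sq_nonneg α) hBpos.le, mul_pos (neg_pos.mpr hα) hApos, hCpos]
  have hD₀ : 0 < α₀ ^ 2 * B - 2 * α₀ * A + C := by
    nlinarith [mul_nonneg (sq_nonneg α₀) hBpos.le, mul_pos (neg_pos.mpr hα₀neg) hApos, hCpos]
  show g α ≤ g α₀
  simp only [g, ← hA, ← hB, ← hC]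
  rw [div_le_div_iff₀ hD hD₀]
  have hNle : A ^ 2 - B * C ≤ 0 := by linarith
  have key : α * (α₀ ^ 2 * B - 2 * α₀ * A + C) - α₀ * (α ^ 2 * B - 2 * α * A + C)
      = -α₀ * B * (α - α₀) ^ 2 := by linear_combination (α₀ - α) * hα₀sq
  nlinarith [mul_nonneg (mul_nonneg (neg_nonneg.mpr hα₀neg.le) hBpos.le)
      (sq_nonneg (α - α₀)), mul_nonpos_of_nonpos_of_nonneg hNle
      (mul_nonneg (mul_nonneg (neg_nonneg.mpr hα₀neg.le) hBpos.le) (sq_nonneg (α - α₀)))]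
end
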